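/- Let (X,d) be a complete separable metric space satisfying the semiparallelogram law, (Ω,𝒜) a measurable space, and B: Ω → (nonempty bounded subsets of X) be given by B(ω) = { f_n(ω) : n ∈ ℕ } for measurable maps f_n: Ω → X with uniformly bounded range (all f_n(ω) lie in a fixed bounded set). Then the map ω ↦ σ(ω), assigning to ω the circumcenter of B(ω), is measurable. -/

import Mathlib

open Metric Filter Topology

variable {X : Type*} [MetricSpace X]

/-- Supremum of distances from `x` to points of `B`. -/
noncomputable def supDist (B : Set X) (x : X) : ℝ := ⨆ y : B, dist x (y : X)

/-- The circumradius of `B`. -/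
noncomputable def circumradius (B : Set X) : ℝ := ⨅ x : X, supDist B x

/-- `x` is a circumcenter of `B`. -/
def IsCircumcenter (B : Set X) (x : X) : Prop := ∀ y ∈ B, dist x y ≤ circumradius B

/-- The semiparallelogram law. -/
def SemiparLaw (X : Type*) [MetricSpace X] : Prop :=
  ∀ x1 x2 : X, ∃ z : X, ∀ x : X,
    dist x1 x2 ^ 2 + 4 * dist z x ^ 2 ≤ 2 * dist x x1 ^ 2 + 2 * dist x x2 ^ 2

/-!
The semiparallelogram law, applied to the midpoint `z` of `x₁, x₂` and to every point of a
bounded set `B`, gives `d(x₁, x₂)² ≤ 2 s(x₁)² + 2 s(x₂)² - 4 r²`, where `s = supDist B` and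
`r` is the circumradius (since `r ≤ s(z)`). Hence every minimizing sequence of `s` is Cauchy,
and in a complete space it converges to a circumcenter.

For measurability, `ω ↦ s_ω(x)` is a countable supremum of measurable functions, and since `s_ω`
is `1`-Lipschitz, the circumradius is the infimum of `s_ω` over a countable dense sequence `q`.
Choosing, for each `k`, the first index `m` with `s_ω(q m) < r_ω + 1/(k+1)` yields measurable
minimizing sequences, whose pointwise limit is the circumcenter and is measurable.
-/

section Circumradius

variable {B : Set X}

theorem dist_le_supDist (hB : Bornology.IsBounded B) (x : X) {y : X} (hy : y ∈ B) :
    dist x y ≤ supDist B x := by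
  obtain ⟨r, hr⟩ := hB.subset_closedBall x
  refine le_ciSup (f := fun y : B => dist x y) ⟨r, ?_⟩ ⟨y, hy⟩
  rintro _ ⟨y, rfl⟩
  exact (dist_comm x y).trans_le (mem_closedBall.1 (hr y.2))

theorem supDist_le (hne : B.Nonempty) {x : X} {r : ℝ} (h : ∀ y ∈ B, dist x y ≤ r) :
    supDist B x ≤ r :=
  have := hne.to_subtype
  ciSup_le fun y => h y y.2

theorem supDist_nonneg (x : X) : 0 ≤ supDist B x :=
  Real.iSup_nonneg fun _ => dist_nonneg

theorem supDist_range {ι : Type*} (f : ι → X) (x : X) :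
    supDist (Set.range f) x = ⨆ i, dist x (f i) :=
  iSup_range' (dist x) f

theorem lipschitzWith_supDist (hB : Bornology.IsBounded B) (hne : B.Nonempty) :
    LipschitzWith 1 (supDist B) :=
  LipschitzWith.of_le_add fun x x' => supDist_le hne fun y hy =>
    calc dist x y ≤ dist x x' + dist x' y := dist_triangle x x' y
      _ ≤ supDist B x' + dist x x' := by linarith [dist_le_supDist hB x' hy]

theorem circumradius_le_supDist (x : X) : circumradius B ≤ supDist B x :=
  ciInf_le ⟨0, by rintro _ ⟨y, rfl⟩; exact supDist_nonneg y⟩ x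

theorem circumradius_nonneg : 0 ≤ circumradius B :=
  Real.iInf_nonneg supDist_nonneg

theorem circumradius_eq_iInf_supDist_of_denseRange {ι : Type*} {q : ι → X} (hq : DenseRange q)
    (hB : Bornology.IsBounded B) (hne : B.Nonempty) :
    circumradius B = ⨅ i, supDist B (q i) := by
  rw [circumradius, ← hq.ciInf' (lipschitzWith_supDist hB hne).continuous, iInf_range']

theorem IsCircumcenter.of_tendsto {ι : Type*} {l : Filter ι} [l.NeBot] (hB : Bornology.IsBounded B)
    {x : ι → X} {c : X} (hx : Tendsto x l (𝓝 c))
    (hr : Tendsto (fun k => supDist B (x k)) l (𝓝 (circumradius B))) :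
    IsCircumcenter B c := fun _ hy =>
  le_of_tendsto_of_tendsto' (hx.dist tendsto_const_nhds) hr fun k => dist_le_supDist hB (x k) hy

end Circumradius

namespace SemiparLaw

variable {B : Set X}

theorem sq_dist_le (hX : SemiparLaw X) (hB : Bornology.IsBounded B) (hne : B.Nonempty)
    (x₁ x₂ : X) :
    dist x₁ x₂ ^ 2 ≤ 2 * supDist B x₁ ^ 2 + 2 * supDist B x₂ ^ 2 - 4 * circumradius B ^ 2 := by
  obtain ⟨z, hz⟩ := hX x₁ x₂
  set M := (2 * supDist B x₁ ^ 2 + 2 * supDist B x₂ ^ 2 - dist x₁ x₂ ^ 2) / 4 with hM_def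
  have hzB : ∀ y ∈ B, dist z y ^ 2 ≤ M := fun y hy => by
    have h₁ : dist y x₁ ≤ supDist B x₁ := dist_comm x₁ y ▸ dist_le_supDist hB x₁ hy
    have h₂ : dist y x₂ ≤ supDist B x₂ := dist_comm x₂ y ▸ dist_le_supDist hB x₂ hy
    nlinarith [hz y, pow_le_pow_left₀ dist_nonneg h₁ 2, pow_le_pow_left₀ dist_nonneg h₂ 2]
  obtain ⟨y₀, hy₀⟩ := hne
  have hM : 0 ≤ M := (sq_nonneg _).trans (hzB y₀ hy₀)
  have hr : circumradius B ≤ √M := (circumradius_le_supDist z).trans <|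
    supDist_le ⟨y₀, hy₀⟩ fun y hy => Real.le_sqrt_of_sq_le (hzB y hy)
  linarith [(Real.le_sqrt circumradius_nonneg hM).1 hr, hM_def]

theorem cauchySeq_of_tendsto_supDist (hX : SemiparLaw X) (hB : Bornology.IsBounded B)
    (hne : B.Nonempty) {x : ℕ → X}
    (hx : Tendsto (fun k => supDist B (x k)) atTop (𝓝 (circumradius B))) :
    CauchySeq x := by
  have he : Tendsto (fun k => supDist B (x k) ^ 2 - circumradius B ^ 2) atTop (𝓝 0) := by
    rw [← sub_self (circumradius B ^ 2)]
    exact (hx.pow 2).sub_const _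
  refine Metric.cauchySeq_iff.2 fun ε hε => ?_
  obtain ⟨N, hN⟩ := eventually_atTop.1 (he.eventually (gt_mem_nhds (by positivity : 0 < ε ^ 2 / 4)))
  refine ⟨N, fun m hm n hn => ?_⟩
  have hmn := hX.sq_dist_le hB hne (x m) (x n)
  have : dist (x m) (x n) ^ 2 < ε ^ 2 := by linarith [hN m hm, hN n hn]
  exact lt_of_pow_lt_pow_left₀ 2 hε.le this

theorem exists_tendsto_isCircumcenter [CompleteSpace X] (hX : SemiparLaw X)
    (hB : Bornology.IsBounded B) (hne : B.Nonempty) {x : ℕ → X}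
    (hx : Tendsto (fun k => supDist B (x k)) atTop (𝓝 (circumradius B))) :
    ∃ c, Tendsto x atTop (𝓝 c) ∧ IsCircumcenter B c :=
  let ⟨c, hc⟩ := cauchySeq_tendsto_of_complete (hX.cauchySeq_of_tendsto_supDist hB hne hx)
  ⟨c, hc, .of_tendsto hB hc hx⟩

end SemiparLaw

theorem exists_measurable_tendsto_iInf {Ω : Type*} [MeasurableSpace Ω] {h : ℕ → Ω → ℝ}
    (hh : ∀ m, Measurable (h m)) (hbdd : ∀ ω, BddBelow (Set.range fun m => h m ω)) :
    ∃ n : ℕ → Ω → ℕ, (∀ k, Measurable (n k)) ∧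
      ∀ ω, Tendsto (fun k => h (n k ω) ω) atTop (𝓝 (⨅ m, h m ω)) := by
  classical
  have hex : ∀ (k : ℕ) ω, ∃ m, h m ω < (⨅ m, h m ω) + 1 / (k + 1) := fun k ω =>
    exists_lt_of_ciInf_lt (lt_add_of_pos_right _ Nat.one_div_pos_of_nat)
  refine ⟨fun k ω => Nat.find (hex k ω), fun k => measurable_find (hex k) fun m =>
    measurableSet_lt (hh m) ((Measurable.iInf hh).add_const _), fun ω => ?_⟩
  refine tendsto_of_tendsto_of_tendsto_of_le_of_le tendsto_const_nhds ?_
    (fun k => ciInf_le (hbdd ω) _) (fun k => (Nat.find_spec (hex k ω)).le)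
  simpa using tendsto_const_nhds.add (tendsto_one_div_add_atTop_nhds_zero_nat (𝕜 := ℝ))

/-- Measurability of the circumcenter of a measurable family of countable uniformly
bounded sets, in a complete separable space with the semiparallelogram law. -/
theorem stmt17 {Ω : Type*} [MeasurableSpace Ω] [CompleteSpace X]
    [TopologicalSpace.SeparableSpace X] [MeasurableSpace X] [BorelSpace X]
    (hX : SemiparLaw X) (f : ℕ → Ω → X) (hf : ∀ n : ℕ, Measurable (f n))
    (K : Set X) (hK : Bornology.IsBounded K) (hfK : ∀ n ω, f n ω ∈ K) :
    ∃ σ : Ω → X, Measurable σ ∧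
      ∀ ω : Ω, IsCircumcenter (Set.range fun n : ℕ => f n ω) (σ ω) := by
  obtain _ | _ := isEmpty_or_nonempty X
  · exact ⟨f 0, hf 0, fun ω => isEmptyElim (f 0 ω)⟩
  set B : Ω → Set X := fun ω => Set.range fun n => f n ω
  have hB ω : Bornology.IsBounded (B ω) := hK.subset (Set.range_subset_iff.2 (hfK · ω))
  have hne ω : (B ω).Nonempty := Set.range_nonempty _
  set q := TopologicalSpace.denseSeq X
  have hs x : Measurable fun ω => supDist (B ω) x := by
    simp only [B, supDist_range]
    exact .iSup fun n => measurable_const.dist (hf n)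
  obtain ⟨n, hn, hlim⟩ := exists_measurable_tendsto_iInf (fun m => hs (q m))
    fun ω => ⟨0, by rintro _ ⟨m, rfl⟩; exact supDist_nonneg _⟩
  have hc ω : ∃ c, Tendsto (fun k => q (n k ω)) atTop (𝓝 c) ∧ IsCircumcenter (B ω) c := by
    refine hX.exists_tendsto_isCircumcenter (hB ω) (hne ω) ?_
    rw [circumradius_eq_iInf_supDist_of_denseRange (TopologicalSpace.denseRange_denseSeq X)
      (hB ω) (hne ω)]
    exact hlim ω
  choose σ hσ using hc
  exact ⟨σ, measurable_of_tendsto_metrizable (fun k => measurable_from_nat.comp (hn k))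
    (tendsto_pi_nhds.2 fun ω => (hσ ω).1), fun ω => (hσ ω).2⟩
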